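/- Let G_syn be an admissible group w.r.t. a prefix P with associated group G_sem, let f ∈ G_sem, let s ∈ S(P), and set s' = f(s). Then the map h : S(P) → S(P) defined by h(s) = s', h(s') = s, and h(t) = t for all t ∈ S(P) \ {s, s'} belongs to G_sem. -/

import Mathlib

/-!
The defining condition of `G_sem` constrains each value `h t` separately, so a bijection `h`
belongs to `G_sem` as soon as every `h t` is `f' t` for some `f' ∈ G_sem`. For the transposition
take `f` at `s`, the identity away from `s` and `f s`, and at `f s` a power `f^(n-1)` with
`f^n s = s`, which exists because `f` permutes the finite set `S(P)`; `G_sem` is closed under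
composition since the witnesses `g` compose.
-/

namespace DQBF

/-- Boolean formulas over variables `α`, modeled by their truth functions. -/
abbrev BF (α : Type*) := (α → Bool) → Bool

/-- The evaluation formula of a variable `v`. -/
def ev {α : Type*} (v : α) : BF α := fun τ => τ v

/-- The assignment `g(σ)` induced by `g : BF(V) → BF(V)` and `σ ∈ A(V)`:
`g(σ)(v) = [g(ev_v)]_σ`. -/
def pushA {α : Type*} (g : BF α → BF α) (σ : α → Bool) : α → Bool :=
  fun v => g (ev v) σ

/-- `g` preserves propositional satisfiability: `[g(φ)]_σ = [φ]_{g(σ)}`. -/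
def PreservesSat {α : Type*} (g : BF α → BF α) : Prop :=
  ∀ (φ : BF α) (σ : α → Bool), g φ σ = φ (pushA g σ)

/-- A formula `F` depends only on the variables in `S`. -/
def DependsOnlyOn {α : Type*} (F : BF α) (S : Set α) : Prop :=
  ∀ τ τ' : α → Bool, (∀ v ∈ S, τ v = τ' v) → F τ = F τ'

variable {X Y : Type*}

/-- Extension of an assignment of the universal variables to all of `V = X ⊕ Y`
(with junk value `false` on `Y`). -/
def extendX (σ : X → Bool) : X ⊕ Y → Bool := Sum.elim σ fun _ => false

/-- The assignment `g(σ) ∈ A(X)` for `σ ∈ A(X)` and admissible `g`: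
`g(σ)(x) = [g(ev_x)]_σ` (well-defined via any extension since `g(ev_x)` depends only on `X`). -/
def pushX (g : BF (X ⊕ Y) → BF (X ⊕ Y)) (σ : X → Bool) : X → Bool :=
  fun x => g (ev (Sum.inl x)) (extendX σ)

/-- An interpretation for the prefix with dependency sets `D`: a family of Skolem
functions, each depending only on its dependency set. -/
structure Interp (D : Y → Set X) where
  sk : Y → BF X
  dep : ∀ y : Y, ∀ σ σ' : X → Bool, (∀ x ∈ D y, σ x = σ' x) → sk y σ = sk y σ'

/-- The induced assignment `σ_s ∈ A(X ⊕ Y)` of `σ ∈ A(X)` and `s ∈ S(P)`. -/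
def induced {D : Y → Set X} (σ : X → Bool) (s : Interp D) : X ⊕ Y → Bool :=
  Sum.elim σ fun y => s.sk y σ

/-- Truth value of the DQBF `P.φ` under the interpretation `s`:
`[P.φ]_s = ⊤` iff `[φ]_{σ_s} = ⊤` for every `σ ∈ A(X)`. -/
def Truth {D : Y → Set X} (φ : BF (X ⊕ Y)) (s : Interp D) : Prop :=
  ∀ σ : X → Bool, φ (induced σ s) = true

/-- A formula `F ∈ BF(Y)` depends on the universal variable `x` if it depends
semantically on some `y ∈ Y` with `x ∈ D_y`. -/
def DependsOn (D : Y → Set X) (F : BF (X ⊕ Y)) (x : X) : Prop :=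
  ∃ y : Y, x ∈ D y ∧ ∃ τ τ' : X ⊕ Y → Bool,
    (∀ v, v ≠ Sum.inr y → τ v = τ' v) ∧ F τ ≠ F τ'

/-- `g`, together with its two-sided inverse `g'`, is admissible w.r.t. the prefix `D`. -/
structure AdmissiblePair (D : Y → Set X) (g g' : BF (X ⊕ Y) → BF (X ⊕ Y)) : Prop where
  left_inv : ∀ φ, g' (g φ) = φ
  right_inv : ∀ φ, g (g' φ) = φ
  presSat : PreservesSat g
  varX : ∀ x : X, DependsOnlyOn (g (ev (Sum.inl x))) (Set.range Sum.inl)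
  varY : ∀ y : Y, DependsOnlyOn (g (ev (Sum.inr y))) (Set.range Sum.inr)
  depCond : ∀ (y : Y) (x : X), DependsOn D (g (ev (Sum.inr y))) x →
    DependsOnlyOn (g' (ev (Sum.inl x))) (Sum.inl '' D y)

/-- An admissible group w.r.t. the prefix `D`: a group (under composition) of
admissible functions. -/
structure AdmissibleGroup (D : Y → Set X) (G : Set (BF (X ⊕ Y) → BF (X ⊕ Y))) : Prop where
  id_mem : id ∈ G
  comp_mem : ∀ g ∈ G, ∀ h ∈ G, (g ∘ h) ∈ G
  inv_mem : ∀ g ∈ G, ∃ g' ∈ G, AdmissiblePair D g g'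

/-- The associated group `G_sem` of a syntactic group `G`: all bijections
`f : S(P) → S(P)` such that for all `s` and `σ` there is `g ∈ G` with
`g(σ)_{f(s)} = g(σ_s)`. -/
def Associated (D : Y → Set X) (G : Set (BF (X ⊕ Y) → BF (X ⊕ Y))) :
    Set (Interp D → Interp D) :=
  {f | Function.Bijective f ∧
    ∀ (s : Interp D) (σ : X → Bool), ∃ g ∈ G,
      induced (pushX g σ) (f s) = pushA g (induced σ s)}

/-- A group of bijections of `S(P)`. -/
structure BijGroup {D : Y → Set X} (G : Set (Interp D → Interp D)) : Prop where
  bij : ∀ f ∈ G, Function.Bijective f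
  id_mem : id ∈ G
  comp_mem : ∀ f ∈ G, ∀ h ∈ G, (f ∘ h) ∈ G
  inv_mem : ∀ f ∈ G, ∀ f', Function.LeftInverse f' f → Function.RightInverse f' f → f' ∈ G

/-- `ψ` is a conjunctive symmetry breaker for the group `G` of bijections of `S(P)`. -/
def ConjSymBreaker {D : Y → Set X} (G : Set (Interp D → Interp D)) (ψ : BF (X ⊕ Y)) : Prop :=
  ∀ s : Interp D, ∃ f ∈ G, Truth ψ (f s)

lemma pushA_comp {g₁ g₂ : BF (X ⊕ Y) → BF (X ⊕ Y)} (h₂ : PreservesSat g₂)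
    (τ : X ⊕ Y → Bool) : pushA (g₂ ∘ g₁) τ = pushA g₁ (pushA g₂ τ) :=
  funext fun v => h₂ (g₁ (ev v)) τ

lemma pushX_comp {g₁ g₂ : BF (X ⊕ Y) → BF (X ⊕ Y)} (h₂ : PreservesSat g₂)
    (h₁ : ∀ x : X, DependsOnlyOn (g₁ (ev (Sum.inl x))) (Set.range Sum.inl))
    (σ : X → Bool) : pushX (g₂ ∘ g₁) σ = pushX g₁ (pushX g₂ σ) := by
  funext x
  change g₂ (g₁ (ev (Sum.inl x))) (extendX σ) = g₁ (ev (Sum.inl x)) (extendX (pushX g₂ σ))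
  rw [h₂]
  exact h₁ x _ _ (by rintro _ ⟨x', rfl⟩; rfl)

instance Interp.finite {D : Y → Set X} [Finite X] [Finite Y] : Finite (Interp D) :=
  Finite.of_injective Interp.sk fun a b hab => by cases a; cases b; congr

section Associated

variable {D : Y → Set X} {G : Set (BF (X ⊕ Y) → BF (X ⊕ Y))}

lemma id_mem_associated (hG : AdmissibleGroup D G) : id ∈ Associated D G := by
  refine ⟨Function.bijective_id, fun s σ => ⟨id, hG.id_mem, ?_⟩⟩
  funext v
  cases v <;> rfl

lemma comp_mem_associated (hG : AdmissibleGroup D G) {f₁ f₂ : Interp D → Interp D}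
    (h₁ : f₁ ∈ Associated D G) (h₂ : f₂ ∈ Associated D G) : f₁ ∘ f₂ ∈ Associated D G := by
  refine ⟨h₁.1.comp h₂.1, fun s σ => ?_⟩
  obtain ⟨g₂, hg₂G, hg₂⟩ := h₂.2 s σ
  obtain ⟨g₁, hg₁G, hg₁⟩ := h₁.2 (f₂ s) (pushX g₂ σ)
  obtain ⟨_, -, hp₂⟩ := hG.inv_mem g₂ hg₂G
  obtain ⟨_, -, hp₁⟩ := hG.inv_mem g₁ hg₁G
  refine ⟨g₂ ∘ g₁, hG.comp_mem g₂ hg₂G g₁ hg₁G, ?_⟩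
  rw [pushX_comp hp₂.presSat hp₁.varX, pushA_comp hp₂.presSat, ← hg₂]
  exact hg₁

lemma iterate_mem_associated (hG : AdmissibleGroup D G) {f : Interp D → Interp D}
    (hf : f ∈ Associated D G) (n : ℕ) : f^[n] ∈ Associated D G := by
  induction n with
  | zero => exact id_mem_associated hG
  | succ k ih => rw [Function.iterate_succ']; exact comp_mem_associated hG hf ih

lemma exists_mem_associated_apply_apply_eq [Finite X] [Finite Y] (hG : AdmissibleGroup D G)
    {f : Interp D → Interp D} (hf : f ∈ Associated D G) (s : Interp D) :
    ∃ f' ∈ Associated D G, f' (f s) = s := by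
  obtain ⟨n, hn, hper⟩ := hf.1.injective.mem_periodicPts s
  refine ⟨f^[n - 1], iterate_mem_associated hG hf (n - 1), ?_⟩
  rw [← Function.iterate_succ_apply, Nat.succ_eq_add_one, Nat.sub_add_cancel hn]
  exact hper

lemma mem_associated_of_forall_exists {h : Interp D → Interp D} (hbij : Function.Bijective h)
    (hpt : ∀ t, ∃ f ∈ Associated D G, f t = h t) : h ∈ Associated D G := by
  refine ⟨hbij, fun t σ => ?_⟩
  obtain ⟨f, hf, hft⟩ := hpt t
  rw [← hft]
  exact hf.2 t σ

end Associated

/-- the transposition of `s` and `s' = f(s)` belongs to `G_sem`. -/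
theorem stmt_11 {X Y : Type*} [Fintype X] [Fintype Y] (D : Y → Set X)
    (G : Set (BF (X ⊕ Y) → BF (X ⊕ Y))) (hG : AdmissibleGroup D G)
    (f : Interp D → Interp D) (hf : f ∈ Associated D G) (s : Interp D)
    (h : Interp D → Interp D)
    (hh1 : h s = f s) (hh2 : h (f s) = s)
    (hh3 : ∀ t : Interp D, t ≠ s → t ≠ f s → h t = t) :
    h ∈ Associated D G := by
  have hinv : Function.Involutive h := by
    intro t
    by_cases hts : t = s
    · rw [hts, hh1, hh2]
    by_cases htfs : t = f s
    · rw [htfs, hh2, hh1]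
    rw [hh3 t hts htfs, hh3 t hts htfs]
  refine mem_associated_of_forall_exists hinv.bijective fun t => ?_
  by_cases hts : t = s
  · exact ⟨f, hf, by rw [hts, hh1]⟩
  by_cases htfs : t = f s
  · rw [htfs, hh2]
    exact exists_mem_associated_apply_apply_eq hG hf s
  exact ⟨id, id_mem_associated hG, (hh3 t hts htfs).symm⟩

end DQBF
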